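/- arXiv:1906.07215 — 4 statements merged into one kernel-verified Lean document; each statement's English description precedes it below -/
import Mathlib

section
/- Let k be a commutative ring, C a cone compatible with an additive total order ≺ on ℤ^n, and f ∈ k_C⟦x_1,...,x_n⟧ with f(0) = a_0 invertible in k. Then there exists f^{-1} ∈ k_C⟦x_1,...,x_n⟧ such that f · f^{-1} = 1. -/
/-- Membership of an integer vector in the cone generated by the `v i`. -/
def InConeZ {n m : ℕ} (v : Fin m → (Fin n → ℤ)) (g : Fin n → ℤ) : Prop :=
  ∃ α : Fin m → ℝ, (∀ i, 0 ≤ α i) ∧ ∀ j, (g j : ℝ) = ∑ i, α i * (v i j : ℝ)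

/-!
Positivity of the `v i` for an additive strict order on `ℤⁿ` forbids a vanishing positive integer
combination of them. Since barycentric coordinates of `0` with respect to affinely independent
integer points are rational, Carathéodory's theorem then keeps `0` out of the real convex hull of
the `v i`, and Hahn–Banach yields an additive `L` with `‖g‖ ≤ L g` on the cone. So every `c` has
finitely many splittings `c = a + b` inside the cone, and `⌊L⌋₊` strictly drops along `c ↦ c - g`
for nonzero `g` in the cone. Along this grading the inverse is defined by `finv 0 = (f 0)⁻¹` and
`finv c = -(f 0)⁻¹ ∑_{g ≠ 0} f g * finv (c - g)`.
-/

open Set Function Finset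

section ConvolutionInverse

variable {G k : Type*} [AddCommGroup G] [CommRing k]

theorem finsum_antidiagonal_eq_sum {M : Type*} [AddCommMonoid M] (F : G → G → M) (c : G)
    {T : Finset G} (hT : ∀ g, F g (c - g) ≠ 0 → g ∈ T) :
    ∑ᶠ p ∈ {p : G × G | p.1 + p.2 = c}, F p.1 p.2 = ∑ g ∈ T, F g (c - g) := by
  have hanti : {p : G × G | p.1 + p.2 = c} = (fun g => (g, c - g)) '' univ := by
    ext ⟨a, b⟩
    simp [eq_sub_iff_add_eq', eq_comm]
  rw [hanti, finsum_mem_image fun _ _ _ _ h => congrArg Prod.fst h, finsum_mem_univ]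
  exact finsum_eq_sum_of_support_subset _ fun g hg => hT g hg

variable [DecidableEq G]

noncomputable def convInv (u : k) (f : G → k) (D : G → Finset G) (ν : G → ℕ)
    (hD : ∀ c, ∀ g ∈ D c, ν (c - g) < ν c) (c : G) : k :=
  if c = 0 then u
  else -u * ∑ g ∈ (D c).attach, f g * convInv u f D ν hD (c - g)
termination_by ν c
decreasing_by exact hD c g.1 g.2

variable {u : k} {f : G → k} {D : G → Finset G} {ν : G → ℕ}
  {hD : ∀ c, ∀ g ∈ D c, ν (c - g) < ν c}

theorem convInv_zero : convInv u f D ν hD 0 = u := by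
  rw [convInv, if_pos rfl]

theorem convInv_of_ne_zero {c : G} (hc : c ≠ 0) :
    convInv u f D ν hD c = -u * ∑ g ∈ D c, f g * convInv u f D ν hD (c - g) := by
  rw [convInv, if_neg hc, sum_attach (D c) fun g => f g * convInv u f D ν hD (c - g)]

theorem support_convInv_subset {S : AddSubmonoid G} (hDS : ∀ c, ∀ g ∈ D c, g ∈ S ∧ c - g ∈ S) :
    support (convInv u f D ν hD) ⊆ S := by
  intro c hc
  by_cases hc0 : c = 0
  · exact hc0 ▸ S.zero_mem
  rw [mem_support, convInv_of_ne_zero hc0] at hc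
  obtain ⟨g, hg, -⟩ := exists_ne_zero_of_sum_ne_zero (right_ne_zero_of_mul hc)
  simpa using S.add_mem (hDS c g hg).1 (hDS c g hg).2

theorem exists_convolution_inverse (S : AddSubmonoid G)
    (hfin : ∀ c, {g | g ∈ S ∧ c - g ∈ S}.Finite) (ν : G → ℕ)
    (hν : ∀ c, ∀ g ∈ S, g ≠ 0 → c - g ∈ S → ν (c - g) < ν c) (f : G → k)
    (hf : support f ⊆ S) (hunit : IsUnit (f 0)) :
    ∃ finv : G → k, support finv ⊆ S ∧ ∀ c,
      ∑ᶠ p ∈ {p : G × G | p.1 + p.2 = c}, f p.1 * finv p.2 = if c = 0 then 1 else 0 := by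
  set D : G → Finset G := fun c => (hfin c).toFinset.erase 0
  have mem_D {c g : G} : g ∈ D c ↔ g ≠ 0 ∧ g ∈ S ∧ c - g ∈ S := by simp [D]
  have hD (c : G) : ∀ g ∈ D c, ν (c - g) < ν c := fun g hg =>
    hν c g (mem_D.1 hg).2.1 (mem_D.1 hg).1 (mem_D.1 hg).2.2
  have hsupp : support (convInv (↑hunit.unit⁻¹) f D ν hD) ⊆ S :=
    support_convInv_subset fun c g hg => (mem_D.1 hg).2
  -- `S` is pointed, since `ν` cannot decrease both from `0` to `-g` and from `-g` to `0`
  have hD0 : D 0 = ∅ := by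
    refine eq_empty_of_forall_notMem fun g hg => ?_
    obtain ⟨hg0, hg, hng⟩ := mem_D.1 hg
    rw [zero_sub] at hng
    have h1 := hν 0 g hg hg0 (by simpa using hng)
    have h2 := hν (-g) (-g) hng (neg_ne_zero.2 hg0) (by simp)
    simp only [zero_sub, sub_self] at h1 h2
    omega
  refine ⟨_, hsupp, fun c => ?_⟩
  rw [finsum_antidiagonal_eq_sum (fun a b => f a * convInv _ f D ν hD b) c (T := insert 0 (D c))
    fun g hg => ?_, sum_insert fun h => (mem_D.1 h).1 rfl, sub_zero]
  · split_ifs with hc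
    · simp [hc, hD0, convInv_zero, hunit.mul_val_inv]
    · rw [convInv_of_ne_zero hc, ← mul_assoc, mul_neg, hunit.mul_val_inv]
      ring
  · have hfg := hf (left_ne_zero_of_mul hg)
    have hcg := hsupp (right_ne_zero_of_mul hg)
    by_cases hg0 : g = 0
    · exact mem_insert.2 (Or.inl hg0)
    · exact mem_insert_of_mem (mem_D.2 ⟨hg0, hfg, hcg⟩)

end ConvolutionInverse

section AdditiveOrder

variable {M ι : Type*} [AddCommMonoid M] {r : M → M → Prop} [IsTrans M r]

theorem pos_sum_nsmul (hadd : ∀ a b c : M, r a b → r (a + c) (b + c)) {s : Finset ι}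
    (hs : s.Nonempty) {a : ι → ℕ} (ha : ∀ i ∈ s, 0 < a i) {x : ι → M}
    (hx : ∀ i ∈ s, r 0 (x i)) : r 0 (∑ i ∈ s, a i • x i) := by
  have pos_add : ∀ y z : M, r 0 y → r 0 z → r 0 (y + z) := fun y z hy hz =>
    _root_.trans hz (by simpa using hadd 0 y z hy)
  refine sum_induction_nonempty _ _ pos_add hs fun i hi => ?_
  rw [← card_range (a i), ← sum_const]
  exact sum_induction_nonempty _ _ pos_add (nonempty_range_iff.2 (ha i hi).ne')
    fun _ _ => hx i hi

end AdditiveOrder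

section RationalWeights

variable {n : ℕ} {ι : Type*} [Fintype ι]

/-- A `ℚ`-linear retraction `ℝ → ℚ` carries the real weights to rational ones satisfying the same
equations, and these are unique. -/
theorem exists_rat_eq_of_affineIndependent (y : ι → Fin n → ℤ)
    (hy : AffineIndependent ℝ fun i j => (y i j : ℝ)) {w : ι → ℝ} (hw : ∑ i, w i = 1)
    (hwy : ∑ i, w i • (fun j => (y i j : ℝ)) = 0) : ∃ q : ι → ℚ, ∀ i, (q i : ℝ) = w i := by
  obtain ⟨π, hπ⟩ := (Algebra.linearMap ℚ ℝ).exists_leftInverse_of_injective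
    (LinearMap.ker_eq_bot.2 (algebraMap ℚ ℝ).injective)
  have hπ1 : π 1 = 1 := by simpa using LinearMap.congr_fun hπ 1
  have hπ_int (z : ℤ) (x : ℝ) : π (x * z) = π x * z := by
    rw [mul_comm, ← zsmul_eq_mul, map_zsmul, zsmul_eq_mul, mul_comm]
  refine ⟨fun i => π (w i), fun i => ?_⟩
  refine hy.eq_of_sum_eq_sum (s := univ) (w₁ := fun i => (π (w i) : ℝ)) ?_ ?_ i (mem_univ i)
  · rw [hw, ← Rat.cast_sum, ← map_sum, hw, hπ1, Rat.cast_one]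
  · rw [hwy]
    funext j
    have hj : ∑ i, w i * y i j = 0 := by simpa using congrFun hwy j
    have : ∑ i, π (w i) * (y i j : ℚ) = 0 := by
      simp only [← hπ_int, ← map_sum, hj, map_zero]
    simpa using congrArg (Rat.cast : ℚ → ℝ) this

theorem exists_common_denominator (q : ι → ℚ) (hq : ∀ i, 0 ≤ q i) :
    ∃ d : ℕ, 0 < d ∧ ∀ i, ∃ a : ℕ, (a : ℚ) = d * q i := by
  classical
  refine ⟨∏ i, (q i).den, prod_pos fun i _ => (q i).den_pos, fun i => ?_⟩
  refine ⟨(q i).num.toNat * ∏ j ∈ univ.erase i, (q j).den, ?_⟩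
  rw [Nat.cast_mul, Nat.cast_prod, Nat.cast_prod, ← mul_prod_erase univ _ (mem_univ i),
    mul_comm _ (q i), ← mul_assoc, Rat.mul_den_eq_num]
  congr 1
  exact_mod_cast Int.toNat_of_nonneg (Rat.num_nonneg.2 (hq i))

end RationalWeights

theorem zero_notMem_convexHull_of_pos {n : ℕ} {ι : Type*} {r : (Fin n → ℤ) → (Fin n → ℤ) → Prop}
    [IsStrictOrder (Fin n → ℤ) r] (hadd : ∀ a b c : Fin n → ℤ, r a b → r (a + c) (b + c))
    (v : ι → Fin n → ℤ) (hv : ∀ i, r 0 (v i)) :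
    (0 : Fin n → ℝ) ∉ convexHull ℝ (range fun i j => (v i j : ℝ)) := by
  intro h
  obtain ⟨κ, _, z, w, hz, haff, hw, hw1, hwz⟩ := eq_pos_convex_span_of_mem_convexHull h
  choose σ hσ using fun i => hz (mem_range_self i)
  obtain rfl : (fun i j => (v (σ i) j : ℝ)) = z := funext hσ
  obtain ⟨q, hq⟩ := exists_rat_eq_of_affineIndependent (v ∘ σ) haff hw1 hwz
  have hq_pos (i : κ) : 0 < q i := by exact_mod_cast (hq i).symm ▸ hw i
  obtain ⟨d, hd, ha⟩ := exists_common_denominator q fun i => (hq_pos i).le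
  choose a ha using ha
  have ha_pos (i : κ) : 0 < a i := by
    exact_mod_cast (ha i).symm ▸ mul_pos (by positivity) (hq_pos i)
  have hsum : ∑ i, a i • v (σ i) = 0 := by
    funext j
    have hj : ∑ i, w i * v (σ i) j = 0 := by simpa using congrFun hwz j
    have ha' (i : κ) : (a i : ℝ) = d * w i := by
      rw [← hq, ← Rat.cast_natCast, ha, Rat.cast_mul, Rat.cast_natCast]
    have : ∑ i, (a i : ℝ) * v (σ i) j = 0 := by
      simp_rw [ha', mul_assoc, ← mul_sum, hj, mul_zero]
    simpa using (by exact_mod_cast this : ∑ i, (a i : ℤ) * v (σ i) j = 0)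
  have hne : (univ : Finset κ).Nonempty := nonempty_of_sum_ne_zero (hw1 ▸ one_ne_zero)
  exact irrefl _ (hsum ▸ pos_sum_nsmul hadd hne (fun i _ => ha_pos i) fun i _ => hv (σ i))

section SeparatingFunctional

variable {E ι : Type*} [NormedAddCommGroup E] [NormedSpace ℝ E]

theorem exists_one_le_of_zero_notMem_convexHull [Finite ι] {V : ι → E}
    (h : 0 ∉ convexHull ℝ (range V)) : ∃ ψ : E →L[ℝ] ℝ, ∀ i, 1 ≤ ψ (V i) := by
  obtain ⟨φ, t, hφ, ht⟩ := geometric_hahn_banach_closed_point (convex_convexHull ℝ _)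
    ((finite_range V).isCompact_convexHull (𝕜 := ℝ)).isClosed h
  rw [map_zero] at ht
  refine ⟨t⁻¹ • φ, fun i => ?_⟩
  have := hφ (V i) (subset_convexHull ℝ _ (mem_range_self i))
  rw [smul_apply, smul_eq_mul, ← div_eq_inv_mul, le_div_iff_of_neg ht]
  linarith

theorem exists_norm_le_of_zero_notMem_convexHull [Fintype ι] {V : ι → E}
    (h : 0 ∉ convexHull ℝ (range V)) : ∃ Λ : E →L[ℝ] ℝ,
      ∀ α : ι → ℝ, (∀ i, 0 ≤ α i) → ‖∑ i, α i • V i‖ ≤ Λ (∑ i, α i • V i) := by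
  obtain ⟨ψ, hψ⟩ := exists_one_le_of_zero_notMem_convexHull h
  set C := ∑ i, ‖V i‖
  refine ⟨C • ψ, fun α hα => ?_⟩
  have hC (i : ι) : ‖V i‖ ≤ C * ψ (V i) :=
    (single_le_sum (fun j _ => norm_nonneg (V j)) (mem_univ i)).trans
      (le_mul_of_one_le_right (sum_nonneg fun j _ => norm_nonneg _) (hψ i))
  calc ‖∑ i, α i • V i‖ ≤ ∑ i, α i * ‖V i‖ := (norm_sum_le _ _).trans_eq
        (sum_congr rfl fun i _ => by rw [norm_smul, Real.norm_of_nonneg (hα i)])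
    _ ≤ ∑ i, α i * (C * ψ (V i)) := sum_le_sum fun i _ => mul_le_mul_of_nonneg_left (hC i) (hα i)
    _ = (C • ψ) (∑ i, α i • V i) := by
        simp only [map_sum, map_smul, smul_apply, smul_eq_mul]

end SeparatingFunctional

section IntegerVectors

variable {n m : ℕ}

theorem pi_norm_intCast (g : Fin n → ℤ) : ‖fun j => (g j : ℝ)‖ = ‖g‖ := by
  simp only [Pi.norm_def]
  congr 2 with j

theorem one_le_pi_norm_of_ne_zero {g : Fin n → ℤ} (hg : g ≠ 0) : 1 ≤ ‖g‖ := by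
  obtain ⟨j, hj⟩ := ne_iff.mp hg
  calc (1 : ℝ) ≤ ‖g j‖ := by rw [Int.norm_eq_abs]; exact_mod_cast Int.one_le_abs hj
    _ ≤ ‖g‖ := norm_le_pi_norm g j

def InConeZ.addSubmonoid (v : Fin m → Fin n → ℤ) : AddSubmonoid (Fin n → ℤ) where
  carrier := {g | InConeZ v g}
  zero_mem' := ⟨0, fun _ => le_rfl, by simp⟩
  add_mem' := by
    rintro a b ⟨α, hα, ha⟩ ⟨β, hβ, hb⟩
    refine ⟨α + β, fun i => add_nonneg (hα i) (hβ i), fun j => ?_⟩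
    simp [ha, hb, add_mul, sum_add_distrib]

theorem InConeZ.exists_addMonoidHom_norm_le {r : (Fin n → ℤ) → (Fin n → ℤ) → Prop}
    [IsStrictOrder (Fin n → ℤ) r] (hadd : ∀ a b c : Fin n → ℤ, r a b → r (a + c) (b + c))
    (v : Fin m → Fin n → ℤ) (hv : ∀ i, r 0 (v i)) :
    ∃ L : (Fin n → ℤ) →+ ℝ, ∀ g, InConeZ v g → ‖g‖ ≤ L g := by
  obtain ⟨Λ, hΛ⟩ := exists_norm_le_of_zero_notMem_convexHull
    (zero_notMem_convexHull_of_pos hadd v hv)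
  refine ⟨Λ.toLinearMap.toAddMonoidHom.comp ((Int.castAddHom ℝ).compLeft (Fin n)),
    fun g ⟨α, hα, hg⟩ => ?_⟩
  have hg' : (fun j => (g j : ℝ)) = ∑ i, α i • fun j => (v i j : ℝ) := by
    funext j
    simp [hg]
  show ‖g‖ ≤ Λ fun j => (g j : ℝ)
  rw [← pi_norm_intCast, hg']
  exact hΛ α hα

variable {S : AddSubmonoid (Fin n → ℤ)} {L : (Fin n → ℤ) →+ ℝ}

theorem finite_decompositions_of_norm_le (hL : ∀ g ∈ S, ‖g‖ ≤ L g) (c : Fin n → ℤ) :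
    {g | g ∈ S ∧ c - g ∈ S}.Finite := by
  refine (isCompact_closedBall (0 : Fin n → ℤ) (L c)).finite_of_discrete.subset ?_
  rintro g ⟨hg, hcg⟩
  have := hL _ hcg
  rw [map_sub] at this
  rw [mem_closedBall_zero_iff]
  linarith [hL g hg, norm_nonneg (c - g)]

theorem floor_sub_lt_floor_of_norm_le (hL : ∀ g ∈ S, ‖g‖ ≤ L g) {c g : Fin n → ℤ} (hg : g ∈ S)
    (hg0 : g ≠ 0) (hcg : c - g ∈ S) : ⌊L (c - g)⌋₊ < ⌊L c⌋₊ := by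
  have hcg_nonneg : 0 ≤ L (c - g) := (norm_nonneg _).trans (hL _ hcg)
  have hLc : L (c - g) + 1 ≤ L c := by
    rw [map_sub]
    linarith [one_le_pi_norm_of_ne_zero hg0, hL g hg]
  rw [Nat.lt_iff_add_one_le, ← Nat.floor_add_one hcg_nonneg]
  exact Nat.floor_mono hLc

end IntegerVectors

/-- a series `f ∈ k_C⟦x_1,…,x_n⟧` whose constant coefficient `f 0` is a
unit of `k` admits an inverse `f⁻¹ ∈ k_C⟦x_1,…,x_n⟧`, i.e. the convolution product
`f · f⁻¹` is the unit series `1`. -/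
theorem stmt_2 (n m : ℕ) (k : Type*) [CommRing k]
    (r : (Fin n → ℤ) → (Fin n → ℤ) → Prop)
    (htot : IsStrictTotalOrder (Fin n → ℤ) r)
    (hadd : ∀ a b c : Fin n → ℤ, r a b → r (a + c) (b + c))
    (v : Fin m → (Fin n → ℤ)) (hv : ∀ i, r 0 (v i))
    (f : (Fin n → ℤ) → k) (hf : ∀ g, f g ≠ 0 → InConeZ v g)
    (hunit : IsUnit (f 0)) :
    ∃ finv : (Fin n → ℤ) → k, (∀ g, finv g ≠ 0 → InConeZ v g) ∧
      ∀ c : Fin n → ℤ,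
        (∑ᶠ p ∈ {p : (Fin n → ℤ) × (Fin n → ℤ) | p.1 + p.2 = c}, f p.1 * finv p.2) =
          if c = 0 then 1 else 0 := by
  have := htot.toIsStrictOrder
  obtain ⟨L, hL⟩ := InConeZ.exists_addMonoidHom_norm_le hadd v hv
  exact exists_convolution_inverse (InConeZ.addSubmonoid v)
    (finite_decompositions_of_norm_le hL) (fun c => ⌊L c⌋₊)
    (fun _ _ hg hg0 hcg => floor_sub_lt_floor_of_norm_le hL hg hg0 hcg) f hf hunit
end

section
/- Let C be a locally Krull–Schmidt category. Then C has the cancellation property: for any objects A, B, C with A ⊕ B ≅ A ⊕ C, one has B ≅ C. -/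
/-!
Decompose `A`, `B` and `B'` into coproducts of nonzero compact objects with local endomorphism
rings. For such an object `X`, the number of summands isomorphic to `X` is an invariant of the
coproduct: an isomorphism `φ` between two decompositions has a block between the summands
isomorphic to `X`, with entries in `End X`, and the blocks of `φ` and `φ⁻¹` become mutually
inverse over the residue division ring of `End X`. Indeed, by compactness each entry of their
product differs from the corresponding entry of `φ ≫ φ⁻¹ = 𝟙` by a finite sum of maps
`X ⟶ Z ⟶ X` through summands `Z ≇ X`, and these are nonunits because a nonzero retract of an
object with local endomorphism ring is isomorphic to it. Division rings have invariant basis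
number, so the blocks are square. Applied to `A ⊕ B ≅ A ⊕ B'`, this shows, after cancelling the
finite multiplicities of `A`, that `B` and `B'` have the same multiplicities; matching their
summands class by class then gives `B ≅ B'`.
-/

open CategoryTheory CategoryTheory.Limits

universe v u

variable {C : Type u} [Category.{v} C]

/-- A cofan is a biproduct if the canonical map `Hom(Z, ∐ᵢ Yᵢ) → ∏ᵢ Hom(Z, Yᵢ)`
induced by the projections is bijective. -/
def IsLocBiproduct [HasZeroMorphisms C] {I : Type v} {Y : I → C}
    (c : Cofan Y) (p : ∀ i, c.pt ⟶ Y i) : Prop :=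
  (∀ i, c.inj i ≫ p i = 𝟙 (Y i)) ∧ (∀ i j, i ≠ j → c.inj i ≫ p j = 0) ∧
    ∀ Z : C, Function.Bijective (fun (φ : Z ⟶ c.pt) => (fun i => φ ≫ p i : ∀ i, Z ⟶ Y i))

/-- An object is compact if every morphism into a coproduct factors through a finite
subcoproduct. -/
def IsCompactObj [Preadditive C] (X : C) : Prop :=
  ∀ (J : Type v) (Z : J → C) (c : Cofan Z), IsColimit c →
    ∀ f : X ⟶ c.pt, ∃ (s : Finset J) (g : ∀ j, X ⟶ Z j),
      f = ∑ j ∈ s, g j ≫ c.inj j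

/-- Local endomorphism ring: every endomorphism `g` has `g` or `𝟙 - g` invertible. -/
def LocalEndo [Preadditive C] (X : C) : Prop :=
  ∀ g : X ⟶ X, IsIso g ∨ IsIso (𝟙 X - g)

/-- A locally Krull–Schmidt category: every object decomposes as a locally finite
direct sum (an infinite biproduct) of compact objects with local endomorphism rings,
each isomorphism class occurring with finite multiplicity. -/
def LocallyKrullSchmidt (C : Type u) [Category.{v} C] [Preadditive C] : Prop :=
  ∀ X : C, ∃ (I : Type v) (Y : I → C) (c : Cofan Y) (p : ∀ i, c.pt ⟶ Y i)
    (_ : IsColimit c), IsLocBiproduct c p ∧ Nonempty (c.pt ≅ X) ∧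
      (∀ i, IsCompactObj (Y i)) ∧ (∀ i, LocalEndo (Y i)) ∧
      (∀ i, {j | Nonempty (Y j ≅ Y i)}.Finite)

namespace IsLocalRing

variable {R : Type*} [Ring R] [IsLocalRing R]

theorem eq_zero_or_eq_one_of_isIdempotentElem {e : R} (he : IsIdempotentElem e) :
    e = 0 ∨ e = 1 := by
  rcases isUnit_or_isUnit_of_add_one (add_sub_cancel e 1) with h | h
  · exact .inr ((IsIdempotentElem.iff_eq_one_of_isUnit h).mp he)
  · exact .inl (sub_eq_self.mp ((IsIdempotentElem.iff_eq_one_of_isUnit h).mp he.one_sub))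

instance : IsDedekindFiniteMonoid R where
  mul_eq_one_symm {a b} hab := by
    have hba : IsIdempotentElem (b * a) := by
      rw [IsIdempotentElem, mul_assoc, ← mul_assoc a, hab, one_mul]
    refine (eq_zero_or_eq_one_of_isIdempotentElem hba).resolve_left fun h0 =>
      one_ne_zero (α := R) ?_
    calc (1 : R) = a * (b * a) * b := by rw [← mul_assoc, hab, one_mul, hab]
      _ = 0 := by rw [h0, mul_zero, zero_mul]

variable (R)

def nonunitsIdeal : TwoSidedIdeal R :=
  .mk' (nonunits R) (by simp) nonunits_add (fun h hu => h (by simpa using hu.neg))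
    (fun h hu => h (isUnit_of_mul_isUnit_right hu))
    (fun h hu => h (isUnit_of_mul_isUnit_left hu))

abbrev ResidueDivisionRing : Type _ := (nonunitsIdeal R).ringCon.Quotient

def ResidueDivisionRing.mk : R →+* ResidueDivisionRing R := (nonunitsIdeal R).ringCon.mk'

variable {R}

theorem ResidueDivisionRing.mk_eq_mk_iff {a b : R} :
    ResidueDivisionRing.mk R a = ResidueDivisionRing.mk R b ↔ a - b ∈ nonunits R :=
  RingCon.eq _

theorem ResidueDivisionRing.mk_surjective : Function.Surjective (ResidueDivisionRing.mk R) :=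
  Quotient.mk''_surjective

instance : Nontrivial (ResidueDivisionRing R) :=
  ⟨ResidueDivisionRing.mk R 1, ResidueDivisionRing.mk R 0, fun h =>
    ResidueDivisionRing.mk_eq_mk_iff.mp h (by rw [sub_zero]; exact isUnit_one)⟩

noncomputable instance : DivisionRing (ResidueDivisionRing R) :=
  .ofIsUnitOrEqZero fun x => by
    obtain ⟨a, rfl⟩ := ResidueDivisionRing.mk_surjective x
    by_cases ha : IsUnit a
    · exact .inl (ha.map _)
    · refine .inr ?_
      rwa [← map_zero (ResidueDivisionRing.mk R), ResidueDivisionRing.mk_eq_mk_iff, sub_zero]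

end IsLocalRing

open IsLocalRing

theorem setOf_nonempty_iso_congr {I : Type*} (Y : I → C) {X X' : C} (e : X ≅ X') :
    {i | Nonempty (Y i ≅ X)} = {i | Nonempty (Y i ≅ X')} :=
  Set.ext fun _ => ⟨fun ⟨f⟩ => ⟨f ≪≫ e⟩, fun ⟨f⟩ => ⟨f ≪≫ e.symm⟩⟩

theorem finite_setOf_nonempty_iso {I : Type*} {Y : I → C}
    (hY : ∀ i, {j | Nonempty (Y j ≅ Y i)}.Finite) (X : C) : {i | Nonempty (Y i ≅ X)}.Finite := by
  by_cases hX : ∃ i, Nonempty (Y i ≅ X)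
  · obtain ⟨i, ⟨e⟩⟩ := hX
    exact setOf_nonempty_iso_congr Y e ▸ hY i
  · exact Set.finite_empty.subset fun i hi => hX ⟨i, hi⟩

theorem nonempty_sigma_iso_of_card_eq {I K : Type v} {Y : I → C} {Z : K → C}
    [HasCoproduct Y] [HasCoproduct Z] (hY : ∀ X, {i | Nonempty (Y i ≅ X)}.Finite)
    (hZ : ∀ X, {k | Nonempty (Z k ≅ X)}.Finite)
    (h : ∀ X, Nat.card {i | Nonempty (Y i ≅ X)} = Nat.card {k | Nonempty (Z k ≅ X)}) :
    Nonempty (∐ Y ≅ ∐ Z) := by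
  let cls : C → Quotient (isIsomorphicSetoid C) := Quotient.mk _
  have hfiber : ∀ x, Nonempty ({i // cls (Y i) = x} ≃ {k // cls (Z k) = x}) := by
    refine Quotient.ind fun X => ?_
    have := (hY X).to_subtype
    have := (hZ X).to_subtype
    have eY : {i // cls (Y i) = cls X} ≃ {i | Nonempty (Y i ≅ X)} :=
      Equiv.subtypeEquivRight fun _ => Quotient.eq
    have eZ : {k // cls (Z k) = cls X} ≃ {k | Nonempty (Z k ≅ X)} :=
      Equiv.subtypeEquivRight fun _ => Quotient.eq
    obtain ⟨e⟩ := Finite.card_eq.mp (h X)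
    exact ⟨eY.trans (e.trans eZ.symm)⟩
  let e : I ≃ K := Equiv.ofFiberEquiv fun x => (hfiber x).some
  exact ⟨Sigma.whiskerEquiv e fun i =>
    (Quotient.exact (Equiv.ofFiberEquiv_map (fun x => (hfiber x).some) i)).some⟩

section Preadditive

variable [Preadditive C]

theorem localEndo_iff_isUnit {X : C} :
    LocalEndo X ↔ ∀ a : End X, IsUnit a ∨ IsUnit (1 - a) := by
  simp only [isUnit_iff_isIso]
  rfl

theorem LocalEndo.isLocalRing {X : C} (hX : LocalEndo X) (hX0 : ¬ IsZero X) :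
    IsLocalRing (End X) :=
  have : Nontrivial (End X) := ⟨𝟙 X, 0, (IsZero.iff_id_eq_zero X).not.mp hX0⟩
  .of_isUnit_or_isUnit_one_sub_self (localEndo_iff_isUnit.mp hX)

theorem LocalEndo.nonempty_iso_of_retract {X Z : C} (hZ : LocalEndo Z) (hX : ¬ IsZero X)
    (h : Retract X Z) : Nonempty (X ≅ Z) := by
  have := hZ.isLocalRing fun hZ0 => hX (hZ0.of_mono h.i)
  let e : End Z := h.r ≫ h.i
  have he : IsIdempotentElem e := by simp [e, IsIdempotentElem, End.mul_def]
  rcases eq_zero_or_eq_one_of_isIdempotentElem he with h0 | h1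
  · refine (hX ((IsZero.iff_id_eq_zero X).mpr ?_)).elim
    calc 𝟙 X = h.i ≫ e ≫ h.r := by simp [e]
      _ = 0 := by rw [h0]; exact (h.i ≫= zero_comp).trans comp_zero
  · exact ⟨⟨h.i, h.r, h.retract, h1⟩⟩

theorem LocalEndo.comp_mem_nonunits {X Z : C} (hZ : LocalEndo Z) [Nontrivial (End X)]
    (hZX : ¬ Nonempty (Z ≅ X)) (u : X ⟶ Z) (v : Z ⟶ X) :
    (u ≫ v : End X) ∈ nonunits (End X) := by
  intro hu
  have : IsIso (u ≫ v) := (isUnit_iff_isIso (u ≫ v : End X)).mp hu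
  have hX : ¬ IsZero X := fun h => one_ne_zero (α := End X) ((IsZero.iff_id_eq_zero X).mp h)
  obtain ⟨e⟩ := hZ.nonempty_iso_of_retract hX
    ⟨u, v ≫ inv (u ≫ v), by rw [← Category.assoc, IsIso.hom_inv_id]⟩
  exact hZX ⟨e.symm⟩

variable {I K : Type v} {Y : I → C} {Z : K → C}

structure IsKrullSchmidtFamily (Y : I → C) : Prop where
  isCompactObj : ∀ i, IsCompactObj (Y i)
  localEndo : ∀ i, LocalEndo (Y i)
  not_isZero : ∀ i, ¬ IsZero (Y i)
  finite : ∀ X, {i | Nonempty (Y i ≅ X)}.Finite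

namespace IsKrullSchmidtFamily

theorem sumElim (hY : IsKrullSchmidtFamily Y) (hZ : IsKrullSchmidtFamily Z) :
    IsKrullSchmidtFamily (Sum.elim Y Z) where
  isCompactObj := Sum.forall.2 ⟨hY.isCompactObj, hZ.isCompactObj⟩
  localEndo := Sum.forall.2 ⟨hY.localEndo, hZ.localEndo⟩
  not_isZero := Sum.forall.2 ⟨hY.not_isZero, hZ.not_isZero⟩
  finite X := Set.finite_preimage_inl_and_inr.mp ⟨hY.finite X, hZ.finite X⟩

theorem card_setOf_nonempty_iso_sumElim (hY : IsKrullSchmidtFamily Y)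
    (hZ : IsKrullSchmidtFamily Z) (X : C) :
    Nat.card {i | Nonempty (Sum.elim Y Z i ≅ X)} =
      Nat.card {i | Nonempty (Y i ≅ X)} + Nat.card {k | Nonempty (Z k ≅ X)} :=
  (Nat.card_congr Equiv.subtypeSum).trans
    (@Nat.card_sum _ _ (hY.finite X).to_subtype (hZ.finite X).to_subtype)

end IsKrullSchmidtFamily

noncomputable def Cofan.isColimitNonzero {c : Cofan Y} (hc : IsColimit c) :
    IsColimit (Cofan.mk c.pt fun i : {i // ¬ IsZero (Y i)} => c.inj i) := by
  classical
  refine Cofan.IsColimit.mk _ (fun s => Cofan.IsColimit.desc hc fun i =>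
    if hi : IsZero (Y i) then 0 else s.inj ⟨i, hi⟩) (fun s i => ?_) (fun s m hm => ?_)
  · simp [i.2]
  · refine Cofan.IsColimit.hom_ext hc _ _ fun i => ?_
    by_cases hi : IsZero (Y i)
    · exact hi.eq_of_src _ _
    · simpa [hi] using hm ⟨i, hi⟩

theorem LocallyKrullSchmidt.exists_isKrullSchmidtFamily (h : LocallyKrullSchmidt C) (X : C) :
    ∃ (I : Type v) (Y : I → C) (_ : HasCoproduct Y),
      IsKrullSchmidtFamily Y ∧ Nonempty (∐ Y ≅ X) := by
  obtain ⟨I, Y, c, -, hc, -, ⟨e⟩, hcomp, hloc, hfin⟩ := h X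
  have hc' := Cofan.isColimitNonzero hc
  have : HasCoproduct fun i : {i // ¬ IsZero (Y i)} => Y i := ⟨⟨⟨_, hc'⟩⟩⟩
  refine ⟨_, _, this, ⟨fun i => hcomp i, fun i => hloc i, fun i => i.2, fun X' => ?_⟩,
    ⟨(colimit.isColimit _).coconePointUniqueUpToIso hc' ≪≫ e⟩⟩
  exact (finite_setOf_nonempty_iso hfin X').preimage (f := Subtype.val)
    Subtype.val_injective.injOn

variable [HasCoproduct Y] [HasCoproduct Z]

theorem IsCompactObj.exists_finset_sum_π_ι_eq [DecidableEq K] {X : C} (hX : IsCompactObj X)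
    (f : X ⟶ ∐ Z) :
    ∃ s : Finset K, ∀ t, s ⊆ t → ∑ k ∈ t, (f ≫ Sigma.π Z k) ≫ Sigma.ι Z k = f := by
  obtain ⟨s, g, hf⟩ := hX K Z _ (colimit.isColimit _) f
  replace hf : f = ∑ j ∈ s, g j ≫ Sigma.ι Z j := hf
  refine ⟨s, fun t hst => ?_⟩
  have hπ (k : K) : f ≫ Sigma.π Z k = if k ∈ s then g k else 0 := by
    simp only [hf, Preadditive.sum_comp, Category.assoc, Sigma.ι_π, comp_dite, comp_zero,
      Finset.sum_dite_eq', eqToHom_refl, Category.comp_id]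
  simp_rw [hπ, ite_comp, zero_comp, Finset.sum_ite_mem, Finset.inter_eq_right.mpr hst, hf]

theorem sub_sum_π_ι_mem_nonunits [DecidableEq K] (hZ : ∀ k, LocalEndo (Z k)) {X : C}
    [IsLocalRing (End X)] (hX : IsCompactObj X) (T : Finset K)
    (hT : ∀ k ∉ T, ¬ Nonempty (Z k ≅ X)) (f : X ⟶ ∐ Z) (w : ∐ Z ⟶ X) :
    (f ≫ w - ∑ k ∈ T, (f ≫ Sigma.π Z k) ≫ Sigma.ι Z k ≫ w : End X) ∈ nonunits (End X) := by
  obtain ⟨s, hs⟩ := hX.exists_finset_sum_π_ι_eq f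
  have hfw : f ≫ w = ∑ k ∈ s ∪ T, (f ≫ Sigma.π Z k) ≫ Sigma.ι Z k ≫ w := by
    simpa only [Preadditive.sum_comp, Category.assoc] using
      (hs (s ∪ T) Finset.subset_union_left).symm =≫ w
  rw [hfw, ← Finset.sum_sdiff Finset.subset_union_right, add_sub_cancel_right]
  exact (nonunitsAddSubmonoid (End X)).sum_mem fun k hk =>
    (hZ k).comp_mem_nonunits (hT k (Finset.mem_sdiff.mp hk).2) _ _

noncomputable def isotypicBlock [DecidableEq K] (X : C) (φ : ∐ Y ⟶ ∐ Z) :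
    Matrix {k | Nonempty (Z k ≅ X)} {i | Nonempty (Y i ≅ X)} (End X) :=
  fun k i =>
    (Classical.choice i.2).inv ≫ Sigma.ι Y i ≫ φ ≫ Sigma.π Z k ≫ (Classical.choice k.2).hom

theorem isotypicBlock_mul_isotypicBlock [DecidableEq I] [DecidableEq K]
    (hZ : ∀ k, LocalEndo (Z k)) {X : C} [IsLocalRing (End X)] (hX : IsCompactObj X)
    [Fintype {k | Nonempty (Z k ≅ X)}] (φ : ∐ Y ⟶ ∐ Z) (ψ : ∐ Z ⟶ ∐ Y) (hφψ : φ ≫ ψ = 𝟙 _) :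
    (isotypicBlock X ψ).map (ResidueDivisionRing.mk (End X)) *
      (isotypicBlock X φ).map (ResidueDivisionRing.mk (End X)) = 1 := by
  rw [← Matrix.map_mul]
  ext i j
  let f : X ⟶ ∐ Z := (Classical.choice j.2).inv ≫ Sigma.ι Y j ≫ φ
  let w : ∐ Z ⟶ X := ψ ≫ Sigma.π Y i ≫ (Classical.choice i.2).hom
  have hentry : (isotypicBlock X ψ * isotypicBlock X φ) i j =
      ∑ k ∈ {k | Nonempty (Z k ≅ X)}.toFinset, (f ≫ Sigma.π Z k) ≫ Sigma.ι Z k ≫ w := by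
    rw [Matrix.mul_apply, ← Finset.sum_set_coe]
    simp [isotypicBlock, f, w, End.mul_def]
  have hfw : f ≫ w = (if i = j then 1 else 0 : End X) := by
    have : f ≫ w = (Classical.choice j.2).inv ≫ (Sigma.ι Y j ≫ Sigma.π Y i) ≫
        (Classical.choice i.2).hom := by
      simp only [f, w, Category.assoc, reassoc_of% hφψ]
    split_ifs with hij
    · subst hij
      simp [this]
    · rw [this, Sigma.ι_π_of_ne _ (fun h => hij (Subtype.ext h.symm)), zero_comp, comp_zero]
  rw [Matrix.map_apply, hentry, Matrix.one_apply]
  have hres := sub_sum_π_ι_mem_nonunits hZ hX {k | Nonempty (Z k ≅ X)}.toFinset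
    (fun k hk h => hk (Set.mem_toFinset.mpr h)) f w
  calc _ = ResidueDivisionRing.mk (End X) (f ≫ w) :=
        (ResidueDivisionRing.mk_eq_mk_iff.mpr hres).symm
    _ = _ := by rw [hfw, apply_ite (ResidueDivisionRing.mk (End X)), map_one, map_zero]

theorem card_setOf_nonempty_iso_eq_of_iso (hY : ∀ i, LocalEndo (Y i))
    (hZ : ∀ k, LocalEndo (Z k)) {X : C} (hXc : IsCompactObj X) (hXl : LocalEndo X)
    (hX0 : ¬ IsZero X) (hYX : {i | Nonempty (Y i ≅ X)}.Finite)
    (hZX : {k | Nonempty (Z k ≅ X)}.Finite) (φ : ∐ Y ≅ ∐ Z) :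
    Nat.card {i | Nonempty (Y i ≅ X)} = Nat.card {k | Nonempty (Z k ≅ X)} := by
  classical
  have := hXl.isLocalRing hX0
  have := hYX.fintype
  have := hZX.fintype
  rw [Nat.card_eq_fintype_card, Nat.card_eq_fintype_card]
  exact Matrix.square_of_invertible _ _
    (isotypicBlock_mul_isotypicBlock hZ hXc φ.hom φ.inv φ.hom_inv_id)
    (isotypicBlock_mul_isotypicBlock hY hXc φ.inv φ.hom φ.inv_hom_id)

namespace IsKrullSchmidtFamily

theorem card_eq_of_iso (hY : IsKrullSchmidtFamily Y) (hZ : IsKrullSchmidtFamily Z)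
    (φ : ∐ Y ≅ ∐ Z) (X : C) :
    Nat.card {i | Nonempty (Y i ≅ X)} = Nat.card {k | Nonempty (Z k ≅ X)} := by
  by_cases hYX : ∃ i, Nonempty (Y i ≅ X)
  · obtain ⟨i, ⟨e⟩⟩ := hYX
    rw [setOf_nonempty_iso_congr Y e.symm, setOf_nonempty_iso_congr Z e.symm]
    exact card_setOf_nonempty_iso_eq_of_iso hY.localEndo hZ.localEndo (hY.isCompactObj i)
      (hY.localEndo i) (hY.not_isZero i) (hY.finite _) (hZ.finite _) φ
  by_cases hZX : ∃ k, Nonempty (Z k ≅ X)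
  · obtain ⟨k, ⟨e⟩⟩ := hZX
    rw [setOf_nonempty_iso_congr Y e.symm, setOf_nonempty_iso_congr Z e.symm]
    exact (card_setOf_nonempty_iso_eq_of_iso hZ.localEndo hY.localEndo (hZ.isCompactObj k)
      (hZ.localEndo k) (hZ.not_isZero k) (hZ.finite _) (hY.finite _) φ.symm).symm
  have : IsEmpty {i | Nonempty (Y i ≅ X)} := ⟨fun ⟨i, hi⟩ => hYX ⟨i, hi⟩⟩
  have : IsEmpty {k | Nonempty (Z k ≅ X)} := ⟨fun ⟨k, hk⟩ => hZX ⟨k, hk⟩⟩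
  rw [Nat.card_of_isEmpty, Nat.card_of_isEmpty]

end IsKrullSchmidtFamily

instance hasCoproduct_sumElim [HasBinaryBiproducts C] : HasCoproduct (Sum.elim Y Z) :=
  ⟨⟨⟨_, Cofan.combPairIsColimit (colimit.isColimit _) (colimit.isColimit _)
    (BinaryBiproduct.isColimit (∐ Y) (∐ Z))⟩⟩⟩

noncomputable def sigmaSumElimIso [HasBinaryBiproducts C] :
    ∐ Sum.elim Y Z ≅ ∐ Y ⊞ ∐ Z :=
  (colimit.isColimit _).coconePointUniqueUpToIso (Cofan.combPairIsColimit (colimit.isColimit _)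
    (colimit.isColimit _) (BinaryBiproduct.isColimit (∐ Y) (∐ Z)))

end Preadditive

/-- a locally Krull–Schmidt category has the cancellation property:
`A ⊕ B ≅ A ⊕ C` implies `B ≅ C`. -/
theorem stmt_7 [Preadditive C] [HasBinaryBiproducts C]
    (h : LocallyKrullSchmidt C) (A B B' : C)
    (e : Nonempty (A ⊞ B ≅ A ⊞ B')) :
    Nonempty (B ≅ B') := by
  obtain ⟨e⟩ := e
  obtain ⟨IA, YA, _, hA, ⟨eA⟩⟩ := h.exists_isKrullSchmidtFamily A
  obtain ⟨IB, YB, _, hB, ⟨eB⟩⟩ := h.exists_isKrullSchmidtFamily B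
  obtain ⟨IB', YB', _, hB', ⟨eB'⟩⟩ := h.exists_isKrullSchmidtFamily B'
  let φ : ∐ Sum.elim YA YB ≅ ∐ Sum.elim YA YB' :=
    sigmaSumElimIso ≪≫ biprod.mapIso eA eB ≪≫ e ≪≫ (sigmaSumElimIso ≪≫ biprod.mapIso eA eB').symm
  have hmult (X : C) :
      Nat.card {j | Nonempty (YB j ≅ X)} = Nat.card {k | Nonempty (YB' k ≅ X)} := by
    have := (hA.sumElim hB).card_eq_of_iso (hA.sumElim hB') φ X
    rwa [hA.card_setOf_nonempty_iso_sumElim hB, hA.card_setOf_nonempty_iso_sumElim hB',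
      Nat.add_left_cancel_iff] at this
  obtain ⟨ψ⟩ := nonempty_sigma_iso_of_card_eq hB.finite hB'.finite hmult
  exact ⟨eB.symm ≪≫ ψ ≪≫ eB'⟩
end

section
/- Let ··· → X_1 →^{f_1} X_2 →^{f_2} X_3 → ··· be a long exact sequence (indexed by ℤ) in an abelian category A which is a full subcategory of an AB4 abelian category G. If the direct sum ⨁_i X_i exists in A, then ∑_i [X_{2i}] = ∑_i [X_{2i+1}] in the Grothendieck group G_0(A), where [⨁_i X_{2i}] and [⨁_i X_{2i+1}] are well defined classes. -/
open CategoryTheory CategoryTheory.Limits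

/-- Exactness of a composable pair in an abelian category. -/
def ExactAt {A : Type*} [Category A] [Abelian A] {X Y Z : A}
    (f : X ⟶ Y) (g : Y ⟶ Z) : Prop :=
  ∃ w : f ≫ g = 0, (CategoryTheory.ShortComplex.mk f g w).Exact

variable {G : Type*} [Category G] [Abelian G]

/-- Relations of the Grothendieck group of the full (abelian, exactly embedded)
subcategory of `G` on the objects satisfying `P`: for every short exact sequence
`0 → X → Y → Z → 0` with all terms in `P`, the element `[Y] - [X] - [Z]`. -/
def g0Rel (P : G → Prop) : AddSubgroup (FreeAbelianGroup {X : G // P X}) :=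
  AddSubgroup.closure {x | ∃ (X Y Z : {X : G // P X}) (f : (X : G) ⟶ (Y : G))
    (g : (Y : G) ⟶ (Z : G)), Mono f ∧ Epi g ∧ ExactAt f g ∧
    x = FreeAbelianGroup.of Y - FreeAbelianGroup.of X - FreeAbelianGroup.of Z}

/-- The Grothendieck group `G_0` of the full subcategory of `G` on `P`. -/
def G0 (P : G → Prop) : Type _ :=
  FreeAbelianGroup {X : G // P X} ⧸ g0Rel P

/-- The class of an object in the Grothendieck group. -/
def g0cls (P : G → Prop) (X : {X : G // P X}) : G0 P :=
  QuotientAddGroup.mk (FreeAbelianGroup.of X)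

instance (P : G → Prop) : AddCommGroup (G0 P) :=
  QuotientAddGroup.Quotient.addCommGroup (g0Rel P)

/-!
Folding the long exact sequence by parity gives maps `d₀ : ⨁ X_{2i} → ⨁ X_{2i+1}` and
`d₁ : ⨁ X_{2i+1} → ⨁ X_{2i}` (the latter shifting the index by one). Since a coproduct of exact
sequences is exact under AB4, the 2-periodic complex `d₀, d₁` is exact at both places. Its images
then give short exact sequences `0 → im d₁ → ⨁ X_{2i} → im d₀ → 0` and
`0 → im d₀ → ⨁ X_{2i+1} → im d₁ → 0`, so both classes equal `[im d₀] + [im d₁]`.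
-/

section ExactAt

variable {A : Type*} [Category A] [Abelian A]

lemma exactAt_iff_of_epi_of_iso_of_mono {X Y Z X' Y' Z' : A} {f : X ⟶ Y} {g : Y ⟶ Z}
    {f' : X' ⟶ Y'} {g' : Y' ⟶ Z'} (α : X ⟶ X') (β : Y ≅ Y') (γ : Z ⟶ Z') [Epi α] [Mono γ]
    (h₁ : f ≫ β.hom = α ≫ f') (h₂ : g ≫ γ = β.hom ≫ g') :
    ExactAt f g ↔ ExactAt f' g' := by
  constructor
  · rintro ⟨w, hw⟩
    have w' : f' ≫ g' = 0 := by
      rw [← cancel_epi α, ← Category.assoc, ← h₁, Category.assoc, ← h₂, reassoc_of% w,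
        zero_comp, comp_zero]
    let φ : ShortComplex.mk f g w ⟶ ShortComplex.mk f' g' w' :=
      { τ₁ := α, τ₂ := β.hom, τ₃ := γ, comm₁₂ := h₁.symm, comm₂₃ := h₂.symm }
    exact ⟨w', (ShortComplex.exact_iff_of_epi_of_isIso_of_mono φ).1 hw⟩
  · rintro ⟨w', hw'⟩
    have w : f ≫ g = 0 := by
      rw [← cancel_mono γ, Category.assoc, h₂, reassoc_of% h₁, w', comp_zero, zero_comp]
    let φ : ShortComplex.mk f g w ⟶ ShortComplex.mk f' g' w' :=
      { τ₁ := α, τ₂ := β.hom, τ₃ := γ, comm₁₂ := h₁.symm, comm₂₃ := h₂.symm }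
    exact ⟨w, (ShortComplex.exact_iff_of_epi_of_isIso_of_mono φ).2 hw'⟩

lemma ExactAt.comp_iso {X Y Z Z' : A} {f : X ⟶ Y} {g : Y ⟶ Z} (h : ExactAt f g)
    (e : Z ≅ Z') : ExactAt f (g ≫ e.hom) :=
  (exactAt_iff_of_epi_of_iso_of_mono (𝟙 X) (Iso.refl Y) e.hom (by simp) (by simp)).1 h

lemma ExactAt.image_ι_factorThruImage {X Y Z : A} {f : X ⟶ Y} {g : Y ⟶ Z} (h : ExactAt f g) :
    ExactAt (image.ι f) (factorThruImage g) := by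
  have h' : ExactAt f (factorThruImage g) :=
    (exactAt_iff_of_epi_of_iso_of_mono (𝟙 X) (Iso.refl Y) (image.ι g) (by simp) (by simp)).2 h
  exact (exactAt_iff_of_epi_of_iso_of_mono (factorThruImage f) (Iso.refl Y) (𝟙 _)
    (by simp) (by simp)).1 h'

end ExactAt

lemma CategoryTheory.Limits.Sigma.reindex_hom_comp_map {C J K : Type*} [Category C] (ε : K ≃ J)
    {Y Z : J → C} [HasCoproduct Y] [HasCoproduct Z] [HasCoproduct (Y ∘ ε)] [HasCoproduct (Z ∘ ε)]
    (g : ∀ j, Y j ⟶ Z j) :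
    (Sigma.reindex ε Y).hom ≫ Limits.Sigma.map g =
      Limits.Sigma.map (f := Y ∘ ε) (g := Z ∘ ε) (fun k => g (ε k)) ≫
        (Sigma.reindex ε Z).hom := by
  ext k
  simp

section Coproducts

variable {J : Type*} [HasCoproductsOfShape J G]

lemma sigma_map_comp_sigma_map_cokernel_π {A B : J → G} (u : ∀ j, A j ⟶ B j) :
    Limits.Sigma.map u ≫ Limits.Sigma.map (fun j => cokernel.π (u j)) = 0 := by
  ext
  simp

noncomputable def isColimitSigmaMapCokernelπ {A B : J → G} (u : ∀ j, A j ⟶ B j) :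
    IsColimit (CokernelCofork.ofπ (Limits.Sigma.map fun j => cokernel.π (u j))
      (sigma_map_comp_sigma_map_cokernel_π u)) :=
  CokernelCofork.IsColimit.ofπ _ _
    (fun t ht => Sigma.desc fun j => cokernel.desc (u j) (Sigma.ι B j ≫ t)
      (by simpa using Sigma.ι A j ≫= ht))
    (fun t ht => by ext; simp)
    (fun t ht m hm => by
      rw [← cancel_epi (Limits.Sigma.map fun j => cokernel.π (u j)), hm]
      ext
      simp)

/-- `(u, v)` is exact iff the induced map `coker u → C` is mono; cokernels commute with
coproducts, and the hypothesis makes the coproduct of these monomorphisms mono. -/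
lemma exactAt_sigma_map
    (hAB4 : ∀ (A B : J → G) (u : ∀ j, A j ⟶ B j), (∀ j, Mono (u j)) → Mono (Limits.Sigma.map u))
    {A B C : J → G} {u : ∀ j, A j ⟶ B j} {v : ∀ j, B j ⟶ C j} (h : ∀ j, ExactAt (u j) (v j)) :
    ExactAt (Limits.Sigma.map u) (Limits.Sigma.map v) := by
  have hw : ∀ j, u j ≫ v j = 0 := fun j => (h j).1
  have : Mono (Limits.Sigma.map fun j => cokernel.desc (u j) (v j) (hw j)) :=
    hAB4 _ _ _ fun j => (ShortComplex.exact_iff_mono_cokernel_desc _).1 (h j).2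
  exact (exactAt_iff_of_epi_of_iso_of_mono (f := Limits.Sigma.map u)
    (g := Limits.Sigma.map fun j => cokernel.π (u j)) (𝟙 _) (Iso.refl _)
    (Limits.Sigma.map fun j => cokernel.desc (u j) (v j) (hw j)) (by simp) (by ext; simp)).1
    ⟨sigma_map_comp_sigma_map_cokernel_π u,
      ShortComplex.exact_of_g_is_cokernel (ShortComplex.mk _ _ _) (isColimitSigmaMapCokernelπ u)⟩

end Coproducts

section GrothendieckGroup

variable (P : G → Prop)

lemma g0cls_eq_add_of_exactAt {X Y Z : G} (hX : P X) (hY : P Y) (hZ : P Z)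
    {u : X ⟶ Y} {v : Y ⟶ Z} [Mono u] [Epi v] (h : ExactAt u v) :
    g0cls P ⟨Y, hY⟩ = g0cls P ⟨X, hX⟩ + g0cls P ⟨Z, hZ⟩ := by
  rw [← sub_eq_zero, sub_add_eq_sub_sub]
  exact (QuotientAddGroup.eq_zero_iff _).2 <|
    AddSubgroup.subset_closure ⟨⟨X, hX⟩, ⟨Y, hY⟩, ⟨Z, hZ⟩, u, v, ‹_›, ‹_›, h, rfl⟩

lemma g0cls_eq_of_exactAt_of_exactAt
    (hPim : ∀ (X Y : G) (f : X ⟶ Y), P X → P Y → P (Limits.image f))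
    {E O : G} (hE : P E) (hO : P O) {d₀ : E ⟶ O} {d₁ : O ⟶ E}
    (h₀₁ : ExactAt d₀ d₁) (h₁₀ : ExactAt d₁ d₀) :
    g0cls P ⟨E, hE⟩ = g0cls P ⟨O, hO⟩ := by
  rw [g0cls_eq_add_of_exactAt P (hPim _ _ d₁ hO hE) hE (hPim _ _ d₀ hE hO)
      h₁₀.image_ι_factorThruImage,
    g0cls_eq_add_of_exactAt P (hPim _ _ d₀ hE hO) hO (hPim _ _ d₁ hO hE)
      h₀₁.image_ι_factorThruImage, add_comm]

end GrothendieckGroup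

section Folding

variable {X : ℤ → G} {f : ∀ i, X i ⟶ X (i + 1)}

lemma exactAt_comp_eqToHom (hlex : ∀ i, ExactAt (f i) (f (i + 1))) {j k : ℤ} (h : j + 1 = k) :
    ExactAt (f j ≫ eqToHom (congrArg X h)) (f k) := by
  subst h
  simpa using hlex j

variable [HasCoproducts.{0} G] (X f)

noncomputable def evenToOdd : (∐ fun i : ℤ => X (2 * i)) ⟶ ∐ fun i : ℤ => X (2 * i + 1) :=
  Limits.Sigma.map fun i => f (2 * i)

/-- `2 * i + 1 + 1` and `2 * (i + 1)` are not definitionally equal, hence the `eqToHom` before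
reindexing along `i ↦ i + 1`. -/
noncomputable def oddToEven : (∐ fun i : ℤ => X (2 * i + 1)) ⟶ ∐ fun i : ℤ => X (2 * i) :=
  Limits.Sigma.map (fun i =>
      f (2 * i + 1) ≫ eqToHom (congrArg X (by ring : 2 * i + 1 + 1 = 2 * (i + 1)))) ≫
    (Sigma.reindex (Equiv.addRight 1) fun i : ℤ => X (2 * i)).hom

variable {X f}

lemma exactAt_evenToOdd_oddToEven
    (hAB4 : ∀ (P Q : ℤ → G) (u : ∀ i, P i ⟶ Q i), (∀ i, Mono (u i)) → Mono (Limits.Sigma.map u))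
    (hlex : ∀ i, ExactAt (f i) (f (i + 1))) :
    ExactAt (evenToOdd X f) (oddToEven X f) :=
  (exactAt_sigma_map hAB4 fun i => (hlex (2 * i)).comp_iso
    (eqToIso (congrArg X (by ring : 2 * i + 1 + 1 = 2 * (i + 1))))).comp_iso
    (Sigma.reindex (Equiv.addRight 1) fun i : ℤ => X (2 * i))

lemma exactAt_oddToEven_evenToOdd
    (hAB4 : ∀ (P Q : ℤ → G) (u : ∀ i, P i ⟶ Q i), (∀ i, Mono (u i)) → Mono (Limits.Sigma.map u))
    (hlex : ∀ i, ExactAt (f i) (f (i + 1))) :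
    ExactAt (oddToEven X f) (evenToOdd X f) := by
  have h := exactAt_sigma_map hAB4 fun i =>
    exactAt_comp_eqToHom hlex (show 2 * i + 1 + 1 = 2 * (i + 1) by ring)
  refine (exactAt_iff_of_epi_of_iso_of_mono (𝟙 _)
    (Sigma.reindex (Equiv.addRight 1) fun i : ℤ => X (2 * i))
    (Sigma.reindex (Equiv.addRight 1) fun i : ℤ => X (2 * i + 1)).hom ?_ ?_).1 h
  · simp [oddToEven]
  · exact (Sigma.reindex_hom_comp_map (Equiv.addRight 1) (fun i => f (2 * i))).symm

end Folding

theorem stmt_12_general [HasCoproducts.{0} G]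
    (hAB4 : ∀ (P Q : ℤ → G) (u : ∀ i, P i ⟶ Q i), (∀ i, Mono (u i)) →
      Mono (Limits.Sigma.map u))
    (P : G → Prop)
    (hPim : ∀ (X Y : G) (f : X ⟶ Y), P X → P Y → P (Limits.image f))
    (X : ℤ → G) (f : ∀ i, X i ⟶ X (i + 1))
    (hlex : ∀ i, ExactAt (f i) (f (i + 1)))
    (hPeven : P (∐ fun i : ℤ => X (2 * i)))
    (hPodd : P (∐ fun i : ℤ => X (2 * i + 1))) :
    g0cls P ⟨∐ fun i : ℤ => X (2 * i), hPeven⟩ =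
      g0cls P ⟨∐ fun i : ℤ => X (2 * i + 1), hPodd⟩ :=
  g0cls_eq_of_exactAt_of_exactAt P hPim hPeven hPodd
    (exactAt_evenToOdd_oddToEven hAB4 hlex) (exactAt_oddToEven_evenToOdd hAB4 hlex)

/-- given a `ℤ`-indexed long exact sequence `⋯ → X_1 → X_2 → X_3 → ⋯`
in a full abelian subcategory `A` (cut out by `P`, closed under images) of an AB4
abelian category `G`, if the direct sum `⨁ᵢ Xᵢ` lies in `A`, then
`∑ᵢ [X_{2i}] = ∑ᵢ [X_{2i+1}]`, i.e. `[⨁ᵢ X_{2i}] = [⨁ᵢ X_{2i+1}]`, in `G_0(A)`. -/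
theorem stmt_12 [HasCoproducts.{0} G]
    (hAB4 : ∀ (P Q : ℤ → G) (u : ∀ i, P i ⟶ Q i), (∀ i, Mono (u i)) →
      Mono (Limits.Sigma.map u))
    (P : G → Prop)
    (hPim : ∀ (X Y : G) (f : X ⟶ Y), P X → P Y → P (Limits.image f))
    (X : ℤ → G) (f : ∀ i, X i ⟶ X (i + 1))
    (hlex : ∀ i, ExactAt (f i) (f (i + 1)))
    (hPX : ∀ i, P (X i))
    (hPall : P (∐ X))
    (hPeven : P (∐ fun i : ℤ => X (2 * i)))
    (hPodd : P (∐ fun i : ℤ => X (2 * i + 1))) :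
    g0cls P ⟨∐ fun i : ℤ => X (2 * i), hPeven⟩ =
      g0cls P ⟨∐ fun i : ℤ => X (2 * i + 1), hPodd⟩ :=
  stmt_12_general hAB4 P hPim X f hlex hPeven hPodd
end

section
/- Let R be a ℤ^n-graded k-algebra (k a field) which is c.b.l.f. dimensional, positive (R = ⨁_{g⪰0} R_g), and with R_0 semi-simple. Then for the simple graded modules S_i = Re_i / R_{≻0}e_i associated to primitive idempotents e_i ∈ R_0, one has Ext^1_R(S_i, x^g S_j) = 0 in the category of graded R-modules with degree-zero maps whenever g ≺ 0; moreover every simple object of this category is isomorphic to a grading shift of some S_i. -/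
/-- A submodule of a graded module is homogeneous if it contains the homogeneous
components of all of its elements. -/
def HomogSubmodule {n : ℕ} {k R M : Type*} [Field k] [Ring R] [Algebra k R]
    [AddCommGroup M] [Module R M] [Module k M]
    (ℳ : (Fin n → ℤ) → Submodule k M) [DirectSum.Decomposition ℳ]
    (N : Submodule R M) : Prop :=
  ∀ x ∈ N, ∀ g : Fin n → ℤ, ((DirectSum.decompose ℳ x) g : M) ∈ N

/-!
(a) An extension `E` of `S_i` by `x^g S_j` with `g ≺ 0` lives in degrees `0` and `g`. As `R` is
positively graded, `R` maps `E_0` into degrees `⪰ 0`, where only `E_0` survives; so `E_0` is a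
graded submodule, and it complements `E_g`.

(b) In a graded-simple module `M`, the components of degree `⪰ h` span a graded submodule for
every `h`, so `M` is concentrated in a single degree `g`. Then `R_{≻0}` kills `M`, and `M` is a
simple `R_0`-module. As `R_0` is semisimple, the annihilator of `0 ≠ s ∈ M` in `R_0` has a
complement `R_0 e` with `e` idempotent; `e` is primitive because `R_0 e ≅ M` is simple, and the
kernel of `Re → M` is `R_{≻0}e` because `R_0 e` acts faithfully on `s`.
-/

namespace DirectSum

variable {ι k M : Type*} [DecidableEq ι] [Semiring k] [AddCommMonoid M] [Module k M]
  {ℳ : ι → Submodule k M} [Decomposition ℳ]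

theorem decompose_eq_zero_of_mem_biSup {P : Set ι} {x : M} (hx : x ∈ ⨆ d ∈ P, ℳ d) {g : ι}
    (hg : g ∉ P) : (decompose ℳ x g : M) = 0 := by
  let proj : M →ₗ[k] M :=
    (ℳ g).subtype ∘ₗ component k ι (fun i ↦ ℳ i) g ∘ₗ (decomposeLinearEquiv ℳ).toLinearMap
  have : ⨆ d ∈ P, ℳ d ≤ LinearMap.ker proj := iSup₂_le fun d hd y hy ↦
    decompose_of_mem_ne ℳ hy fun hdg ↦ hg (hdg ▸ hd)
  exact this hx

theorem mem_biSup_of_decompose_eq_zero {P : Set ι} {x : M}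
    (hx : ∀ g ∉ P, (decompose ℳ x g : M) = 0) : x ∈ ⨆ d ∈ P, ℳ d := by
  classical
  rw [← sum_support_decompose ℳ x]
  refine Submodule.sum_mem _ fun d _ ↦ ?_
  by_cases hd : d ∈ P
  · exact Submodule.mem_iSup_of_mem d (Submodule.mem_iSup_of_mem hd (decompose ℳ x d).2)
  · rw [hx d hd]
    exact zero_mem _

theorem mem_of_forall_ne_eq_bot {g : ι} (hconc : ∀ h ≠ g, ℳ h = ⊥) (x : M) : x ∈ ℳ g := by
  have : x ∈ ⨆ d ∈ ({g} : Set ι), ℳ d := mem_biSup_of_decompose_eq_zero fun d hd ↦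
    (Submodule.eq_bot_iff _).mp (hconc d hd) _ (decompose ℳ x d).2
  simpa using this

theorem exists_ne_bot_of_nontrivial [Nontrivial M] : ∃ g, ℳ g ≠ ⊥ := by
  by_contra! h
  obtain ⟨x, hx⟩ := exists_ne (0 : M)
  have : x ∈ ⨆ d ∈ (∅ : Set ι), ℳ d := mem_biSup_of_decompose_eq_zero fun d _ ↦
    (Submodule.eq_bot_iff _).mp (h d) _ (decompose ℳ x d).2
  simp_all

end DirectSum

open DirectSum

theorem isSimpleModule_of_forall_ne_eq_bot {ι k R M : Type*} [DecidableEq ι] [Semiring k] [Ring R]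
    [AddCommGroup M] [Module k M] [Module R M] [Nontrivial M] {ℳ : ι → Submodule k M}
    [Decomposition ℳ]
    (hsimple : ∀ N : Submodule R M, N.IsHomogeneous ℳ → N = ⊥ ∨ N = ⊤) {g : ι}
    (hconc : ∀ h ≠ g, ℳ h = ⊥) : IsSimpleModule R M where
  eq_bot_or_eq_top N := hsimple N fun i x hx ↦ by
    by_cases hi : i = g
    · rwa [hi, decompose_of_mem_same ℳ (mem_of_forall_ne_eq_bot hconc x)]
    · rw [decompose_of_mem_ne ℳ (mem_of_forall_ne_eq_bot hconc x) (Ne.symm hi)]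
      exact zero_mem N

section GradedModule

variable {ι k R M : Type*} [DecidableEq ι] [AddGroup ι] {r : ι → ι → Prop}
  [CommRing k] [Ring R] [Algebra k R] {𝒜 : ι → Submodule k R}
  [AddCommGroup M] [Module R M] [Module k M] [IsScalarTower k R M]
  {ℳ : ι → Submodule k M} [SetLike.GradedSMul 𝒜 ℳ]

theorem smul_eq_zero_of_mem_biSup_pos [Std.Irrefl r] [Decomposition ℳ] {g : ι}
    (hconc : ∀ h ≠ g, ℳ h = ⊥) {a : R} (ha : a ∈ ⨆ c ∈ {c | r 0 c}, 𝒜 c) (x : M) : a • x = 0 := by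
  have hx : x ∈ ℳ g := mem_of_forall_ne_eq_bot hconc x
  have : ⨆ c ∈ {c | r 0 c}, 𝒜 c ≤ LinearMap.ker ((LinearMap.id : R →ₗ[k] R).smulRight x) :=
    iSup₂_le fun c hc b hb ↦ (Submodule.eq_bot_iff _).mp
      (hconc (c + g) (by simpa using ne_of_irrefl' hc)) _ (SetLike.GradedSMul.smul_mem hb hx)
  exact this ha

variable [GradedAlgebra 𝒜]

theorem smul_mem_biSup_of_pos (hpos : ∀ c, ¬(c = 0 ∨ r 0 c) → 𝒜 c = ⊥) {P : Set ι}
    (hP : ∀ c, r 0 c → ∀ d ∈ P, c + d ∈ P ∨ ℳ (c + d) = ⊥) (a : R) {x : M}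
    (hx : x ∈ ⨆ d ∈ P, ℳ d) : a • x ∈ ⨆ d ∈ P, ℳ d := by
  classical
  have : ⨆ d ∈ P, ℳ d ≤ (⨆ d ∈ P, ℳ d).comap (DistribSMul.toLinearMap k M a) := by
    refine iSup₂_le fun d hd y hy ↦ ?_
    rw [Submodule.mem_comap, DistribSMul.toLinearMap_apply, ← sum_support_decompose 𝒜 a,
      Finset.sum_smul]
    refine Submodule.sum_mem _ fun c _ ↦ ?_
    have hcy : (decompose 𝒜 a c : R) • y ∈ ℳ (c + d) :=
      SetLike.GradedSMul.smul_mem (decompose 𝒜 a c).2 hy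
    by_cases hc : c = 0 ∨ r 0 c
    · rcases hc with rfl | hc
      · rw [zero_add] at hcy
        exact Submodule.mem_iSup_of_mem d (Submodule.mem_iSup_of_mem hd hcy)
      · rcases hP c hc d hd with hcd | hcd
        · exact Submodule.mem_iSup_of_mem _ (Submodule.mem_iSup_of_mem hcd hcy)
        · rw [(Submodule.eq_bot_iff _).mp hcd _ hcy]
          exact zero_mem _
    · rw [(Submodule.eq_bot_iff _).mp (hpos c hc) _ (decompose 𝒜 a c).2, zero_smul]
      exact zero_mem _
  exact this hx

def degreeSubmodule (hpos : ∀ c, ¬(c = 0 ∨ r 0 c) → 𝒜 c = ⊥) (P : Set ι)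
    (hP : ∀ c, r 0 c → ∀ d ∈ P, c + d ∈ P ∨ ℳ (c + d) = ⊥) : Submodule R M where
  toAddSubmonoid := (⨆ d ∈ P, ℳ d).toAddSubmonoid
  smul_mem' a _ hx := smul_mem_biSup_of_pos hpos hP a hx

section degreeSubmodule

variable {hpos : ∀ c, ¬(c = 0 ∨ r 0 c) → 𝒜 c = ⊥} {P : Set ι}
  {hP : ∀ c, r 0 c → ∀ d ∈ P, c + d ∈ P ∨ ℳ (c + d) = ⊥}

theorem mem_degreeSubmodule {x : M} : x ∈ degreeSubmodule hpos P hP ↔ x ∈ ⨆ d ∈ P, ℳ d :=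
  Iff.rfl

theorem isHomogeneous_degreeSubmodule [Decomposition ℳ] :
    (degreeSubmodule hpos P hP).IsHomogeneous ℳ := by
  intro i x hx
  rw [mem_degreeSubmodule] at hx ⊢
  by_cases hi : i ∈ P
  · exact Submodule.mem_iSup_of_mem i (Submodule.mem_iSup_of_mem hi (decompose ℳ x i).2)
  · rw [decompose_eq_zero_of_mem_biSup hx hi]
    exact zero_mem _

end degreeSubmodule

theorem exists_isHomogeneous_isCompl_of_neg [IsStrictOrder ι r] [Decomposition ℳ]
    (hpos : ∀ c, ¬(c = 0 ∨ r 0 c) → 𝒜 c = ⊥) {g : ι} (hg : r g 0) (N : Submodule R M)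
    (hNg : ∀ x ∈ N, x ∈ ℳ g) (hN : ∀ h ≠ 0, ∀ x ∈ ℳ h, x ∈ N) :
    ∃ N' : Submodule R M, N'.IsHomogeneous ℳ ∧ IsCompl N N' := by
  have hdisj : ∀ {h}, h ≠ g → ∀ x ∈ ℳ h, x ∈ ℳ g → x = 0 := fun hhg x hxh hxg ↦
    by_contra fun hx ↦ hhg (degree_eq_of_mem_mem ℳ hxh hxg hx)
  have hvanish : ∀ c, r 0 c → ℳ c = ⊥ := fun c hc ↦ (Submodule.eq_bot_iff _).mpr fun x hx ↦
    hdisj (ne_of_irrefl' (_root_.trans hg hc)) x hx (hNg x (hN c (ne_of_irrefl' hc) x hx))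
  let N' : Submodule R M := degreeSubmodule (ℳ := ℳ) hpos {0} fun c hc d hd ↦ by
    rw [hd, add_zero]
    exact .inr (hvanish c hc)
  have hN' : ∀ x, x ∈ N' ↔ x ∈ ℳ 0 := fun x ↦ by simp [N', mem_degreeSubmodule]
  refine ⟨N', isHomogeneous_degreeSubmodule, ?_, ?_⟩
  · exact Submodule.disjoint_def.mpr fun x hxN hxN' ↦
      hdisj (ne_of_irrefl' hg) x ((hN' x).mp hxN') (hNg x hxN)
  · classical
    refine codisjoint_iff.mpr (Submodule.eq_top_iff'.mpr fun x ↦ ?_)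
    rw [← sum_support_decompose ℳ x]
    refine Submodule.sum_mem _ fun c _ ↦ ?_
    by_cases hc : c = 0
    · subst hc
      exact Submodule.mem_sup_right ((hN' _).mpr (decompose ℳ x 0).2)
    · exact Submodule.mem_sup_left (hN c hc _ (decompose ℳ x c).2)

theorem eq_bot_of_lt_of_ne_bot [IsStrictOrder ι r] [Decomposition ℳ]
    (hadd : ∀ a b c, r a b → r (a + c) (b + c)) (hpos : ∀ c, ¬(c = 0 ∨ r 0 c) → 𝒜 c = ⊥)
    (hsimple : ∀ N : Submodule R M, N.IsHomogeneous ℳ → N = ⊥ ∨ N = ⊤)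
    {g h : ι} (hgh : r g h) (hg : ℳ g ≠ ⊥) : ℳ h = ⊥ := by
  let P : Set ι := {d | d = h ∨ r h d}
  have hP : ∀ c, r 0 c → ∀ d ∈ P, c + d ∈ P ∨ ℳ (c + d) = ⊥ := fun c hc d hd ↦ by
    have hd' : r d (c + d) := by simpa using hadd 0 c d hc
    rcases hd with rfl | hd
    exacts [.inl (.inr hd'), .inl (.inr (_root_.trans hd hd'))]
  let N : Submodule R M := degreeSubmodule hpos P hP
  rcases hsimple N isHomogeneous_degreeSubmodule with hN | hN
  · refine (Submodule.eq_bot_iff _).mpr fun x hx ↦ ?_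
    have : x ∈ N := Submodule.mem_iSup_of_mem h (Submodule.mem_iSup_of_mem (.inl rfl) hx)
    simpa [hN] using this
  · refine absurd ((Submodule.eq_bot_iff _).mpr fun x hx ↦ ?_) hg
    have : x ∈ N := hN ▸ Submodule.mem_top
    rw [← decompose_of_mem_same ℳ hx]
    refine decompose_eq_zero_of_mem_biSup this ?_
    rintro (rfl | hhg)
    exacts [irrefl g hgh, asymm hgh hhg]

theorem exists_forall_ne_eq_bot [IsStrictTotalOrder ι r] [Decomposition ℳ] [Nontrivial M]
    (hadd : ∀ a b c, r a b → r (a + c) (b + c)) (hpos : ∀ c, ¬(c = 0 ∨ r 0 c) → 𝒜 c = ⊥)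
    (hsimple : ∀ N : Submodule R M, N.IsHomogeneous ℳ → N = ⊥ ∨ N = ⊤) :
    ∃ g, ℳ g ≠ ⊥ ∧ ∀ h ≠ g, ℳ h = ⊥ := by
  obtain ⟨g, hg⟩ := exists_ne_bot_of_nontrivial (ℳ := ℳ)
  refine ⟨g, hg, fun h hhg ↦ ?_⟩
  rcases trichotomous_of r h g with hhg' | rfl | hhg'
  · by_contra hh
    exact hg (eq_bot_of_lt_of_ne_bot hadd hpos hsimple hhg' hh)
  · exact absurd rfl hhg
  · exact eq_bot_of_lt_of_ne_bot hadd hpos hsimple hhg' hg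

theorem sub_decompose_zero_mem_biSup_pos (hpos : ∀ c, ¬(c = 0 ∨ r 0 c) → 𝒜 c = ⊥) (a : R) :
    a - decompose 𝒜 a 0 ∈ ⨆ c ∈ {c | r 0 c}, 𝒜 c := by
  refine mem_biSup_of_decompose_eq_zero fun c hc ↦ ?_
  rw [decompose_sub, DFinsupp.sub_apply, Submodule.coe_sub, sub_eq_zero]
  by_cases hc0 : c = 0
  · subst hc0
    exact (decompose_of_mem_same 𝒜 (decompose 𝒜 a 0).2).symm
  · rw [(Submodule.eq_bot_iff _).mp (hpos c (not_or.mpr ⟨hc0, hc⟩)) _ (decompose 𝒜 a c).2,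
      decompose_of_mem_ne 𝒜 (decompose 𝒜 a 0).2 (Ne.symm hc0)]

theorem smul_eq_decompose_zero_smul [Std.Irrefl r] [Decomposition ℳ]
    (hpos : ∀ c, ¬(c = 0 ∨ r 0 c) → 𝒜 c = ⊥) {g : ι} (hconc : ∀ h ≠ g, ℳ h = ⊥) (a : R) (x : M) :
    a • x = (decompose 𝒜 a 0 : R) • x := by
  rw [← sub_eq_zero, ← sub_smul,
    smul_eq_zero_of_mem_biSup_pos hconc (sub_decompose_zero_mem_biSup_pos hpos a)]

theorem mul_smul_eq_zero_iff_exists_mem_biSup_pos [Std.Irrefl r] [Decomposition ℳ]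
    (hpos : ∀ c, ¬(c = 0 ∨ r 0 c) → 𝒜 c = ⊥) {g : ι} (hconc : ∀ h ≠ g, ℳ h = ⊥) {e : R} {s : M}
    (hes : e • s = s) (hinj : ∀ a ∈ 𝒜 0, (a * e) • s = 0 → a * e = 0) (a : R) :
    (a * e) • s = 0 ↔ ∃ b ∈ ⨆ c ∈ {c | r 0 c}, 𝒜 c, a * e = b * e := by
  have hvanish : ∀ b ∈ ⨆ c ∈ {c | r 0 c}, 𝒜 c, (b * e) • s = 0 := fun b hb ↦ by
    rw [mul_smul, hes, smul_eq_zero_of_mem_biSup_pos hconc hb]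
  constructor
  · intro ha
    have ha₀ : (decompose 𝒜 a 0 * e : R) • s = 0 := by
      rw [← sub_sub_cancel a (decompose 𝒜 a 0), sub_mul, sub_smul, ha,
        hvanish _ (sub_decompose_zero_mem_biSup_pos hpos a), sub_zero]
    refine ⟨_, sub_decompose_zero_mem_biSup_pos hpos a, ?_⟩
    rw [sub_mul, hinj _ (decompose 𝒜 a 0).2 ha₀, sub_zero]
  · rintro ⟨b, hb, hab⟩
    rw [hab, hvanish b hb]

end GradedModule

section SemisimpleRing

variable {A M : Type*} [Ring A] [AddCommGroup M] [Module A M]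

theorem exists_isIdempotentElem_smul_eq [IsSemisimpleRing A] (s : M) :
    ∃ e : A, IsIdempotentElem e ∧ e • s = s ∧ ∀ a : A, (a * e) • s = 0 → a * e = 0 := by
  obtain ⟨I, hKI⟩ := exists_isCompl (LinearMap.ker (LinearMap.toSpanSingleton A M s))
  have hI : ∀ u ∈ I, (u • s = 0 ↔ u = 0) := fun u hu ↦
    ⟨fun hus ↦ (Submodule.mem_bot A).mp (hKI.inf_eq_bot ▸ ⟨hus, hu⟩), fun h ↦ by rw [h, zero_smul]⟩
  -- `e` is the `I`-component of `1` in `A = ker ⊕ I`, so right multiplication by `e` fixes `I`.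
  set e := I.projection _ hKI.symm 1
  have he : e ∈ I := Submodule.projection_apply_mem _ 1
  have hmul : ∀ u ∈ I, u * e = u := fun u hu ↦ by
    rw [← smul_eq_mul, ← LinearMap.map_smul, smul_eq_mul, mul_one,
      Submodule.projection_apply_of_mem_left _ hu]
  have hes : (1 - e) • s = 0 := Submodule.sub_projection_mem hKI.symm 1
  refine ⟨e, hmul e he, by rwa [sub_smul, one_smul, sub_eq_zero, eq_comm] at hes,
    fun a ha ↦ (hI _ (I.smul_mem a he)).mp ha⟩

theorem IsSimpleModule.eq_zero_or_eq_zero_of_add_eq [IsSimpleModule A M] {s : M} {e : A}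
    (hes : e • s = s) (hinj : ∀ a : A, (a * e) • s = 0 → a * e = 0) {a b : A}
    (ha : IsIdempotentElem a) (hb : IsIdempotentElem b) (hab : a * b = 0) (hba : b * a = 0)
    (habe : a + b = e) :
    a = 0 ∨ b = 0 := by
  have hae : a * e = a := by rw [← habe, mul_add, ha.eq, hab, add_zero]
  have hbe : b * e = b := by rw [← habe, mul_add, hba, hb.eq, zero_add]
  refine or_iff_not_imp_left.mpr fun ha0 ↦ ?_
  have has : a • s ≠ 0 := fun has ↦ ha0 (by rw [← hae, hinj a (by rw [mul_smul, hes, has])])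
  -- `M` is simple, so `a • s` generates `s`; hence `b = b y a`, and then `b = b a = 0`.
  obtain ⟨y, hy⟩ := IsSimpleModule.toSpanSingleton_surjective A has s
  rw [LinearMap.toSpanSingleton_apply] at hy
  have hfix : (b - b * y * a) * e = b - b * y * a := by rw [sub_mul, mul_assoc _ a, hae, hbe]
  have hb' : b = b * y * a := sub_eq_zero.mp <| hfix ▸ hinj _ <| by
    rw [sub_smul, mul_smul, mul_smul, hy, sub_self]
  calc b = b * y * a := hb'
    _ = b * y * a * a := by rw [mul_assoc _ a a, ha.eq]
    _ = 0 := by rw [← hb', hba]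

theorem isSimpleModule_of_forall_smul_eq {R : Type*} [Ring R] [Module R M] [IsSimpleModule R M]
    (h : ∀ (a : R) (x : M), ∃ b : A, a • x = b • x) :
    IsSimpleModule A M := by
  have := IsSimpleModule.nontrivial R M
  refine (isSimpleModule_iff_toSpanSingleton_surjective).mpr ⟨inferInstance, fun x hx y ↦ ?_⟩
  obtain ⟨a, rfl⟩ := IsSimpleModule.toSpanSingleton_surjective R hx y
  obtain ⟨b, hb⟩ := h a x
  exact ⟨b, hb.symm⟩

end SemisimpleRing

theorem homogSubmodule_iff_isHomogeneous {n : ℕ} {k R M : Type*} [Field k] [Ring R] [Algebra k R]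
    [AddCommGroup M] [Module R M] [Module k M] (ℳ : (Fin n → ℤ) → Submodule k M)
    [Decomposition ℳ] (N : Submodule R M) : HomogSubmodule ℳ N ↔ N.IsHomogeneous ℳ :=
  ⟨fun h i _ hx ↦ h _ hx i, fun h _ hx i ↦ h i hx⟩

theorem stmt_16_general (n : ℕ) (k : Type*) [Field k]
    (r : (Fin n → ℤ) → (Fin n → ℤ) → Prop)
    (htot : IsStrictTotalOrder (Fin n → ℤ) r)
    (hadd : ∀ a b c : Fin n → ℤ, r a b → r (a + c) (b + c))
    (R : Type*) [Ring R] [Algebra k R]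
    (𝒜 : (Fin n → ℤ) → Submodule k R) [GradedAlgebra 𝒜]
    -- positivity: `R = ⨁_{g ⪰ 0} R_g`
    (hposR : ∀ g : Fin n → ℤ, ¬(g = 0 ∨ r 0 g) → 𝒜 g = ⊥)
    -- `R_0` is semisimple
    (hss : IsSemisimpleRing ↥(𝒜 0)) :
    -- (a) Ext¹ vanishing for `g ≺ 0`
    (∀ (E : Type*) (_ : AddCommGroup E) (_ : Module R E) (_ : Module k E)
      (_ : IsScalarTower k R E)
      (ℰ : (Fin n → ℤ) → Submodule k E) (_ : DirectSum.Decomposition ℰ),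
      (∀ (g h : Fin n → ℤ) (a : R) (x : E), a ∈ 𝒜 g → x ∈ ℰ h → a • x ∈ ℰ (g + h)) →
      ∀ (g : Fin n → ℤ), r g 0 →
      ∀ N : Submodule R E, HomogSubmodule ℰ N →
        -- `N ≅ x^g S_j`: concentrated in degree `g` and graded-simple
        (∀ x : E, x ∈ N → x ∈ ℰ g) → N ≠ ⊥ →
        (∀ N' : Submodule R E, HomogSubmodule ℰ N' → N' ≤ N → N' = ⊥ ∨ N' = N) →
        -- `E/N ≅ S_i`: concentrated in degree `0` and graded-simple
        (∀ h : Fin n → ℤ, h ≠ 0 → ∀ x : E, x ∈ ℰ h → x ∈ N) → N ≠ ⊤ →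
        (∀ N' : Submodule R E, HomogSubmodule ℰ N' → N ≤ N' → N' = N ∨ N' = ⊤) →
        -- the extension splits by a graded complement
        ∃ N' : Submodule R E, HomogSubmodule ℰ N' ∧ IsCompl N N') ∧
    -- (b) classification of simple graded modules
    (∀ (S : Type*) (_ : AddCommGroup S) (_ : Module R S) (_ : Module k S)
      (_ : IsScalarTower k R S)
      (𝒮 : (Fin n → ℤ) → Submodule k S) (_ : DirectSum.Decomposition 𝒮),
      (∀ (g h : Fin n → ℤ) (a : R) (x : S), a ∈ 𝒜 g → x ∈ 𝒮 h → a • x ∈ 𝒮 (g + h)) →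
      (∀ N : Submodule R S, HomogSubmodule 𝒮 N → N = ⊥ ∨ N = ⊤) →
      (⊥ : Submodule R S) ≠ ⊤ →
      ∃ (g : Fin n → ℤ) (s : S) (e : R),
        s ∈ 𝒮 g ∧ (∀ h : Fin n → ℤ, h ≠ g → 𝒮 h = ⊥) ∧
        e ∈ 𝒜 0 ∧ e * e = e ∧ e ≠ 0 ∧
        (∀ a b : R, a ∈ 𝒜 0 → b ∈ 𝒜 0 → a * a = a → b * b = b →
          a * b = 0 → b * a = 0 → a + b = e → a = 0 ∨ b = 0) ∧
        e • s = s ∧ Submodule.span R {s} = ⊤ ∧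
        (∀ x : R, (x * e) • s = 0 ↔
          ∃ y ∈ (⨆ h ∈ {h : Fin n → ℤ | r 0 h}, 𝒜 h), x * e = y * e)) := by
  have := htot
  refine ⟨fun E _ _ _ _ ℰ _ hℰ g hg N _ hNg _ _ hN _ _ ↦ ?_,
    fun S _ _ _ _ 𝒮 _ h𝒮 hsimple hnt ↦ ?_⟩
  · have : SetLike.GradedSMul 𝒜 ℰ := ⟨fun _ _ _ _ ha hx ↦ hℰ _ _ _ _ ha hx⟩
    obtain ⟨N', hN', hNN'⟩ := exists_isHomogeneous_isCompl_of_neg hposR hg N hNg hN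
    exact ⟨N', (homogSubmodule_iff_isHomogeneous ℰ N').mpr hN', hNN'⟩
  have : SetLike.GradedSMul 𝒜 𝒮 := ⟨fun _ _ _ _ ha hx ↦ h𝒮 _ _ _ _ ha hx⟩
  have : Nontrivial S := (Submodule.nontrivial_iff R).mp ⟨⊥, ⊤, hnt⟩
  replace hsimple : ∀ N : Submodule R S, N.IsHomogeneous 𝒮 → N = ⊥ ∨ N = ⊤ := fun N hN ↦
    hsimple N ((homogSubmodule_iff_isHomogeneous 𝒮 N).mpr hN)
  obtain ⟨g, hg, hconc⟩ := exists_forall_ne_eq_bot hadd hposR hsimple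
  have := isSimpleModule_of_forall_ne_eq_bot hsimple hconc
  obtain ⟨s, hs, hs0⟩ := (Submodule.ne_bot_iff _).mp hg
  let : Module (𝒜 0) S := Module.compHom S (SetLike.GradeZero.subring 𝒜).subtype
  have : IsSimpleModule (𝒜 0) S := isSimpleModule_of_forall_smul_eq fun a x ↦
    ⟨decompose 𝒜 a 0, smul_eq_decompose_zero_smul hposR hconc a x⟩
  obtain ⟨e, he, hes, hinj⟩ := exists_isIdempotentElem_smul_eq (A := 𝒜 0) s
  refine ⟨g, s, e, hs, hconc, e.2, congrArg Subtype.val he.eq, fun he0 ↦ hs0 ?_,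
    fun a b ha hb haa hbb hab hba habe ↦ ?_, hes, IsSimpleModule.span_singleton_eq_top R hs0,
    mul_smul_eq_zero_iff_exists_mem_biSup_pos hposR hconc hes fun a ha ↦
      congrArg Subtype.val ∘ hinj ⟨a, ha⟩⟩
  · exact hes.symm.trans (show (e : R) • s = 0 by rw [he0, zero_smul])
  · exact (IsSimpleModule.eq_zero_or_eq_zero_of_add_eq hes hinj (a := ⟨a, ha⟩) (b := ⟨b, hb⟩)
      (Subtype.ext haa) (Subtype.ext hbb) (Subtype.ext hab) (Subtype.ext hba)
      (Subtype.ext habe)).imp (congrArg Subtype.val) (congrArg Subtype.val)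

/-- let `R` be a positive, c.b.l.f. dimensional `ℤ^n`-graded `k`-algebra
with `R_0` semisimple.  Then (a) `Ext¹(S_i, x^g S_j) = 0` for `g ≺ 0`: every extension
of graded modules `0 → T → E → S → 0` with `T` simple concentrated in degree `g ≺ 0`
and the quotient `S` simple concentrated in degree `0` splits by a graded complement;
and (b) every simple graded module is (up to grading shift) isomorphic to some
`S_i = Re_i / R_{≻0}e_i`: it is concentrated in a single degree `g` and is generated
by an element `s` with `e • s = s` for a primitive idempotent `e ∈ R_0`, the kernel of
the induced surjection `Re ↠ S` being `R_{≻0}e`. -/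
theorem stmt_16 (n m : ℕ) (k : Type*) [Field k]
    (r : (Fin n → ℤ) → (Fin n → ℤ) → Prop)
    (htot : IsStrictTotalOrder (Fin n → ℤ) r)
    (hadd : ∀ a b c : Fin n → ℤ, r a b → r (a + c) (b + c))
    (R : Type*) [Ring R] [Algebra k R]
    (𝒜 : (Fin n → ℤ) → Submodule k R) [GradedAlgebra 𝒜]
    -- c.b.l.f. dimensional
    (hdim : ∀ g, FiniteDimensional k ↥(𝒜 g))
    (v : Fin m → (Fin n → ℤ)) (hv : ∀ i, r 0 (v i))
    (e₀ : Fin n → ℤ) (hsupp : ∀ g, 𝒜 g ≠ ⊥ → InConeZ v (g - e₀))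
    -- positivity: `R = ⨁_{g ⪰ 0} R_g`
    (hposR : ∀ g : Fin n → ℤ, ¬(g = 0 ∨ r 0 g) → 𝒜 g = ⊥)
    -- `R_0` is semisimple
    (hss : IsSemisimpleRing ↥(𝒜 0)) :
    -- (a) Ext¹ vanishing for `g ≺ 0`
    (∀ (E : Type*) (_ : AddCommGroup E) (_ : Module R E) (_ : Module k E)
      (_ : IsScalarTower k R E)
      (ℰ : (Fin n → ℤ) → Submodule k E) (_ : DirectSum.Decomposition ℰ),
      (∀ (g h : Fin n → ℤ) (a : R) (x : E), a ∈ 𝒜 g → x ∈ ℰ h → a • x ∈ ℰ (g + h)) →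
      ∀ (g : Fin n → ℤ), r g 0 →
      ∀ N : Submodule R E, HomogSubmodule ℰ N →
        -- `N ≅ x^g S_j`: concentrated in degree `g` and graded-simple
        (∀ x : E, x ∈ N → x ∈ ℰ g) → N ≠ ⊥ →
        (∀ N' : Submodule R E, HomogSubmodule ℰ N' → N' ≤ N → N' = ⊥ ∨ N' = N) →
        -- `E/N ≅ S_i`: concentrated in degree `0` and graded-simple
        (∀ h : Fin n → ℤ, h ≠ 0 → ∀ x : E, x ∈ ℰ h → x ∈ N) → N ≠ ⊤ →
        (∀ N' : Submodule R E, HomogSubmodule ℰ N' → N ≤ N' → N' = N ∨ N' = ⊤) →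
        -- the extension splits by a graded complement
        ∃ N' : Submodule R E, HomogSubmodule ℰ N' ∧ IsCompl N N') ∧
    -- (b) classification of simple graded modules
    (∀ (S : Type*) (_ : AddCommGroup S) (_ : Module R S) (_ : Module k S)
      (_ : IsScalarTower k R S)
      (𝒮 : (Fin n → ℤ) → Submodule k S) (_ : DirectSum.Decomposition 𝒮),
      (∀ (g h : Fin n → ℤ) (a : R) (x : S), a ∈ 𝒜 g → x ∈ 𝒮 h → a • x ∈ 𝒮 (g + h)) →
      (∀ N : Submodule R S, HomogSubmodule 𝒮 N → N = ⊥ ∨ N = ⊤) →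
      (⊥ : Submodule R S) ≠ ⊤ →
      ∃ (g : Fin n → ℤ) (s : S) (e : R),
        s ∈ 𝒮 g ∧ (∀ h : Fin n → ℤ, h ≠ g → 𝒮 h = ⊥) ∧
        e ∈ 𝒜 0 ∧ e * e = e ∧ e ≠ 0 ∧
        (∀ a b : R, a ∈ 𝒜 0 → b ∈ 𝒜 0 → a * a = a → b * b = b →
          a * b = 0 → b * a = 0 → a + b = e → a = 0 ∨ b = 0) ∧
        e • s = s ∧ Submodule.span R {s} = ⊤ ∧
        (∀ x : R, (x * e) • s = 0 ↔
          ∃ y ∈ (⨆ h ∈ {h : Fin n → ℤ | r 0 h}, 𝒜 h), x * e = y * e)) :=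
  stmt_16_general n k r htot hadd R 𝒜 hposR hss
end
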